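/- Suppose a₂ > 0 and f_M(1) = 0. Then f_M(r) > 0 for all r ∈ (0,1); that is, the trap radius equals 1 and the system is purifiable. -/

import Mathlib

/-- The rate F(r,n) = Σ_j b_j n_j − r Σ_j a_j (1 − n_j²). -/
noncomputable def F (a b : Fin 3 → ℝ) (r : ℝ) (n : Fin 3 → ℝ) : ℝ :=
  (∑ j, b j * n j) - r * ∑ j, a j * (1 - n j ^ 2)

/-- f_M(r) = sup { F(r,n) : |n| = 1 }. -/
noncomputable def fM (a b : Fin 3 → ℝ) (r : ℝ) : ℝ :=
  sSup (F a b r '' {n : Fin 3 → ℝ | (∑ j, n j ^ 2) = 1})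

/-- f_m(r) = inf { F(r,n) : |n| = 1 }. -/
noncomputable def fm (a b : Fin 3 → ℝ) (r : ℝ) : ℝ :=
  sInf (F a b r '' {n : Fin 3 → ℝ | (∑ j, n j ^ 2) = 1})

/-!
Indices are the paper's: `a₁, a₂, a₃` are `a 0, a 1, a 2`. For a unit vector `n`,
`F(r,n) = F(1,n) + (1 - r) Σ_j a_j (1 - n_j²)`, and on the unit sphere
`Σ_j a_j (1 - n_j²) - a₂ = (a₁ - a₂) n₂² + a₁ n₃² + a₃ (n₁² + n₂²) ≥ 0`.
Taking suprema gives `f_M(r) ≥ f_M(1) + (1 - r) a₂ = (1 - r) a₂ > 0` for `r < 1`.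
-/

lemma abs_le_one_of_sum_sq_eq_one {ι : Type*} [Fintype ι] {n : ι → ℝ}
    (hn : ∑ j, n j ^ 2 = 1) (i : ι) : |n i| ≤ 1 := by
  rw [← sq_le_one_iff_abs_le_one, ← hn]
  exact Finset.single_le_sum (f := fun j => n j ^ 2) (fun j _ => sq_nonneg (n j))
    (Finset.mem_univ i)

lemma isCompact_setOf_sum_sq_eq_one {ι : Type*} [Fintype ι] :
    IsCompact {n : ι → ℝ | ∑ j, n j ^ 2 = 1} := by
  refine (isCompact_closedBall (0 : ι → ℝ) 1).of_isClosed_subset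
    (isClosed_eq (by fun_prop) continuous_const) fun n hn => ?_
  rw [mem_closedBall_zero_iff, pi_norm_le_iff_of_nonneg zero_le_one]
  exact fun i => (Real.norm_eq_abs _).trans_le (abs_le_one_of_sum_sq_eq_one hn i)

lemma bddAbove_F_image (a b : Fin 3 → ℝ) (r : ℝ) :
    BddAbove (F a b r '' {n : Fin 3 → ℝ | ∑ j, n j ^ 2 = 1}) :=
  isCompact_setOf_sum_sq_eq_one.bddAbove_image (by unfold F; fun_prop)

lemma F_eq_F_one_add (a b : Fin 3 → ℝ) (r : ℝ) (n : Fin 3 → ℝ) :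
    F a b r n = F a b 1 n + (1 - r) * ∑ j, a j * (1 - n j ^ 2) := by
  unfold F; ring

lemma a_one_le_sum_mul_one_sub_sq {a n : Fin 3 → ℝ} (h10 : a 1 ≤ a 0) (h1 : 0 ≤ a 1)
    (h2 : 0 ≤ a 2) (hn : ∑ j, n j ^ 2 = 1) : a 1 ≤ ∑ j, a j * (1 - n j ^ 2) := by
  rw [Fin.sum_univ_three] at hn ⊢
  nlinarith [mul_nonneg (sub_nonneg.2 h10) (sq_nonneg (n 1)), mul_nonneg h1 (sq_nonneg (n 2)),
    mul_nonneg h2 (add_nonneg (sq_nonneg (n 0)) (sq_nonneg (n 1)))]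

lemma fM_one_add_le_fM {a b : Fin 3 → ℝ} {c r : ℝ} (hr : r ≤ 1)
    (hc : ∀ n : Fin 3 → ℝ, ∑ j, n j ^ 2 = 1 → c ≤ ∑ j, a j * (1 - n j ^ 2)) :
    fM a b 1 + (1 - r) * c ≤ fM a b r := by
  have hne : {n : Fin 3 → ℝ | ∑ j, n j ^ 2 = 1}.Nonempty :=
    ⟨![1, 0, 0], by simp [Fin.sum_univ_three]⟩
  rw [← le_sub_iff_add_le]
  refine csSup_le (hne.image _) ?_
  rintro _ ⟨n, hn, rfl⟩
  have hFr : F a b r n ≤ fM a b r := le_csSup (bddAbove_F_image a b r) ⟨n, hn, rfl⟩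
  have hcn : (1 - r) * c ≤ (1 - r) * ∑ j, a j * (1 - n j ^ 2) :=
    mul_le_mul_of_nonneg_left (hc n hn) (sub_nonneg.2 hr)
  rw [F_eq_F_one_add a b r n] at hFr
  linarith

theorem purifiable_of_fM_one_zero_general (a b : Fin 3 → ℝ)
    (h12 : a 1 ≤ a 0) (h3 : 0 ≤ a 2)
    (ha2 : 0 < a 1) (hf1 : fM a b 1 = 0) :
    ∀ r ∈ Set.Ioo (0 : ℝ) 1, 0 < fM a b r := by
  rintro r ⟨-, hr1⟩
  have hbound := fM_one_add_le_fM (b := b) hr1.le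
    fun n hn => a_one_le_sum_mul_one_sub_sq h12 ha2.le h3 hn
  rw [hf1, zero_add] at hbound
  exact (mul_pos (sub_pos.2 hr1) ha2).trans_le hbound

/-- If a₂ > 0 and f_M(1) = 0 then f_M > 0 on (0,1): the trap radius equals 1 and the
system is purifiable. -/
theorem purifiable_of_fM_one_zero (a b : Fin 3 → ℝ)
    (h12 : a 1 ≤ a 0) (h23 : a 2 ≤ a 1) (h3 : 0 ≤ a 2)
    (ha2 : 0 < a 1) (hf1 : fM a b 1 = 0) :
    ∀ r ∈ Set.Ioo (0 : ℝ) 1, 0 < fM a b r :=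
  purifiable_of_fM_one_zero_general a b h12 h3 ha2 hf1
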